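/- Contrapositive of Landau's theorem: Let A : [1,∞) → ℝ be continuous, and suppose the integral g(s) = ∫₁^∞ A(x) x^{-s} dx converges for all s with Re s sufficiently large. Suppose there is a real number σ₁ and a holomorphic function G on an open set U ⊆ ℂ containing both the real ray {σ ∈ ℝ : σ > σ₁} and a half-plane {Re s > c} on which the integral converges, with G agreeing with g on that half-plane; and suppose that g admits no holomorphic extension to the full half-plane {s ∈ ℂ : Re s > σ₁}. Then A(x) changes sign for arbitrarily large x: for every X ≥ 1 there exist x, y > X with A(x) > 0 and A(y) < 0. -/

import Mathlib

/-!
If `A` does not change sign on `(X, ∞)`, say `A ≥ 0` there (otherwise use `-A`), let `a` be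
the abscissa of absolute convergence of `g`. If `a > σ₁`, then `g` is holomorphic on `Re s > a`
and, by the identity theorem along the real ray, agrees with `G` near every real `σ > a`; since
`G` is holomorphic on a disc around `a`, the Taylor series of `g` at a real `σ₀` slightly to the
right of `a` converges at some real `σ₀ - ρ < a`. Its terms there are
`ρⁿ/n! ∫ A(x) logⁿx x^{-σ₀} dx`, and on `(X, ∞)` the integrands are nonnegative, so monotone
convergence sums the series under the integral into `∫ |A(x)| x^{ρ-σ₀} dx < ∞`: absolute
convergence at `σ₀ - ρ < a`, a contradiction. Hence `g` converges absolutely, and is therefore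
holomorphic, on the whole half-plane `Re s > σ₁`.
-/

open MeasureTheory Filter Set Topology
open scoped Nat

lemma log_pow_mul_rpow_le (n : ℕ) {ε : ℝ} (hε : 0 < ε) :
    ∃ C, ∀ x : ℝ, 1 ≤ x → ∀ σ t : ℝ, σ + ε ≤ t → Real.log x ^ n * x ^ (-t) ≤ C * x ^ (-σ) := by
  set δ := ε / (n + 1)
  have hδ : 0 < δ := by positivity
  have hδn : δ * n ≤ ε := by
    rw [div_mul_eq_mul_div, div_le_iff₀ (by positivity)]
    nlinarith
  refine ⟨δ⁻¹ ^ n, fun x hx σ t ht => ?_⟩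
  have hx0 : 0 < x := one_pos.trans_le hx
  calc Real.log x ^ n * x ^ (-t) ≤ (x ^ δ / δ) ^ n * x ^ (-t) := by
        gcongr
        · exact Real.log_nonneg hx
        · exact Real.log_le_rpow_div hx0.le hδ
    _ = δ⁻¹ ^ n * x ^ (δ * n + -t) := by
        rw [div_pow, ← Real.rpow_natCast (x ^ δ), ← Real.rpow_mul hx0.le, Real.rpow_add hx0]
        ring
    _ ≤ δ⁻¹ ^ n * x ^ (-σ) := by
        gcongr
        linarith

lemma integrable_of_hasSum_of_nonneg {α : Type*} [MeasurableSpace α] {μ : Measure α}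
    {u : ℕ → α → ℝ} {f : α → ℝ} (hu : ∀ n, Integrable (u n) μ) (hu0 : ∀ n, 0 ≤ᵐ[μ] u n)
    (hf : ∀ᵐ a ∂μ, HasSum (fun n => u n a) (f a)) (hsum : Summable fun n => ∫ a, u n a ∂μ) :
    Integrable f μ := by
  have hf' : ∀ᵐ a ∂μ, HasSum (fun n => u n a) (f a) ∧ ∀ n, 0 ≤ u n a :=
    hf.and (ae_all_iff.mpr hu0)
  have hf0 : 0 ≤ᵐ[μ] f := hf'.mono fun a ha => ha.1.nonneg ha.2
  refine ⟨aestronglyMeasurable_of_tendsto_ae atTop (fun N => Finset.aestronglyMeasurable_sum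
    (Finset.range N) fun n _ => (hu n).aestronglyMeasurable) ?_, ?_⟩
  · exact hf.mono fun a ha => by simpa only [Finset.sum_apply] using ha.tendsto_sum_nat
  rw [hasFiniteIntegral_iff_ofReal hf0]
  calc ∫⁻ a, ENNReal.ofReal (f a) ∂μ = ∫⁻ a, ∑' n, ENNReal.ofReal (u n a) ∂μ :=
        lintegral_congr_ae <| hf'.mono fun a ha => by
          dsimp only
          rw [← ha.1.tsum_eq, ENNReal.ofReal_tsum_of_nonneg ha.2 ha.1.summable]
    _ = ∑' n, ENNReal.ofReal (∫ a, u n a ∂μ) := by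
        rw [lintegral_tsum fun n => (hu n).aemeasurable.ennreal_ofReal]
        exact tsum_congr fun n => (ofReal_integral_eq_lintegral_ofReal (hu n) (hu0 n)).symm
    _ = ENNReal.ofReal (∑' n, ∫ a, u n a ∂μ) :=
        (ENNReal.ofReal_tsum_of_nonneg (fun n => integral_nonneg_of_ae (hu0 n)) hsum).symm
    _ < ⊤ := ENNReal.ofReal_lt_top

lemma IsUpperSet.exists_Ioi_subset_subset_Ici {S : Set ℝ} (hS : IsUpperSet S) {b σ : ℝ}
    (hb : b ∈ S) (hσ : σ ∉ S) : ∃ a, σ ≤ a ∧ Ioi a ⊆ S ∧ S ⊆ Ici a := by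
  have hlower : σ ∈ lowerBounds S := fun τ hτ => le_of_not_gt fun h => hσ (hS h.le hτ)
  refine ⟨sInf S, le_csInf ⟨b, hb⟩ hlower, fun τ hτ => ?_, fun τ hτ => csInf_le ⟨σ, hlower⟩ hτ⟩
  obtain ⟨τ', hτ', hlt⟩ := (csInf_lt_iff ⟨σ, hlower⟩ ⟨b, hb⟩).mp hτ
  exact hS hlt.le hτ'

lemma eventuallyEq_nhds_ofReal_of_eqOn_halfPlane {g G : ℂ → ℂ} {U : Set ℂ} {a c t : ℝ}
    (hg : DifferentiableOn ℂ g {s | a < s.re}) (hU : IsOpen U) (hG : DifferentiableOn ℂ G U)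
    (hray : ∀ σ : ℝ, a < σ → (σ : ℂ) ∈ U) (heq : ∀ s : ℂ, c < s.re → g s = G s) (ht : a < t) :
    g =ᶠ[𝓝 (t : ℂ)] G := by
  set W := U ∩ {s : ℂ | a < s.re}
  obtain ⟨b, hab, hcb⟩ : ∃ b : ℝ, a < b ∧ c < b :=
    ⟨max a c + 1, by linarith [le_max_left a c], by linarith [le_max_right a c]⟩
  set V := connectedComponentIn W (b : ℂ)
  have hV : IsOpen V :=
    (hU.inter (isOpen_lt continuous_const Complex.continuous_re)).connectedComponentIn
  have hrayV : Complex.ofReal '' Ioi a ⊆ V :=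
    (isPreconnected_Ioi.image _ Complex.continuous_ofReal.continuousOn).subset_connectedComponentIn
      ⟨b, hab, rfl⟩ (by rintro _ ⟨σ, hσ, rfl⟩; exact ⟨hray σ hσ, hσ⟩)
  have hbV : (b : ℂ) ∈ V := hrayV ⟨b, hab, rfl⟩
  have hVW : V ⊆ W := connectedComponentIn_subset _ _
  have hgG : g =ᶠ[𝓝 (b : ℂ)] G :=
    eventually_of_mem ((isOpen_lt continuous_const Complex.continuous_re).mem_nhds
      (by simpa using hcb : c < (b : ℂ).re)) heq
  have hEq : EqOn g G V :=
    ((hg.mono (hVW.trans inter_subset_right)).analyticOnNhd hV).eqOn_of_preconnected_of_eventuallyEq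
      ((hG.mono (hVW.trans inter_subset_left)).analyticOnNhd hV)
      isPreconnected_connectedComponentIn hbV hgG
  exact eventually_of_mem (hV.mem_nhds (hrayV ⟨t, ht, rfl⟩)) hEq

namespace Landau

noncomputable def logMoment (A : ℝ → ℝ) (n : ℕ) (s : ℂ) : ℂ :=
  ∫ x in Ioi (1 : ℝ), (A x : ℂ) * (Real.log x : ℂ) ^ n * (x : ℂ) ^ (-s)

def AbsIntegrableAt (A : ℝ → ℝ) (σ : ℝ) : Prop :=
  IntegrableOn (fun x : ℝ => |A x| * x ^ (-σ)) (Ioi 1)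

lemma norm_logMoment_integrand (A : ℝ → ℝ) {x : ℝ} (hx : 1 ≤ x) (n : ℕ) (s : ℂ) :
    ‖(A x : ℂ) * (Real.log x : ℂ) ^ n * (x : ℂ) ^ (-s)‖
      = |A x| * (Real.log x ^ n * x ^ (-s.re)) := by
  rw [norm_mul, norm_mul, norm_pow, Complex.norm_real, Complex.norm_real,
    Complex.norm_cpow_eq_rpow_re_of_pos (one_pos.trans_le hx), Complex.neg_re, Real.norm_eq_abs,
    Real.norm_of_nonneg (Real.log_nonneg hx), mul_assoc]

lemma logMoment_zero (A : ℝ → ℝ) (s : ℂ) :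
    logMoment A 0 s = ∫ x in Ioi (1 : ℝ), (A x : ℂ) * (x : ℂ) ^ (-s) := by
  simp only [logMoment, pow_zero, mul_one]

lemma logMoment_ofReal (A : ℝ → ℝ) (n : ℕ) (σ : ℝ) :
    logMoment A n σ = ((∫ x in Ioi (1 : ℝ), A x * Real.log x ^ n * x ^ (-σ) : ℝ) : ℂ) := by
  rw [logMoment, ← integral_complex_ofReal]
  refine setIntegral_congr_fun measurableSet_Ioi fun x hx => ?_
  rw [Complex.ofReal_mul, Complex.ofReal_mul, Complex.ofReal_pow,
    Complex.ofReal_cpow (one_pos.trans hx).le, Complex.ofReal_neg]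

lemma logMoment_neg (A : ℝ → ℝ) (n : ℕ) (s : ℂ) : logMoment (-A) n s = -logMoment A n s := by
  simp only [logMoment, Pi.neg_apply, Complex.ofReal_neg, neg_mul, integral_neg]

lemma absIntegrableAt_neg {A : ℝ → ℝ} {σ : ℝ} : AbsIntegrableAt (-A) σ ↔ AbsIntegrableAt A σ := by
  simp only [AbsIntegrableAt, Pi.neg_apply, abs_neg]

lemma absIntegrableAt_of_integrableOn {A : ℝ → ℝ} {σ : ℝ}
    (h : IntegrableOn (fun x : ℝ => (A x : ℂ) * (x : ℂ) ^ (-(σ : ℂ))) (Ioi 1)) :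
    AbsIntegrableAt A σ := by
  refine IntegrableOn.congr_fun h.norm (fun x hx => ?_) measurableSet_Ioi
  rw [norm_mul, Complex.norm_real, Real.norm_eq_abs,
    Complex.norm_cpow_eq_rpow_re_of_pos (one_pos.trans hx), Complex.neg_re, Complex.ofReal_re]

variable {A : ℝ → ℝ} (hA : AEStronglyMeasurable A (volume.restrict (Ioi 1)))
include hA

lemma AbsIntegrableAt.mono {σ σ' : ℝ} (h : AbsIntegrableAt A σ) (hσ : σ ≤ σ') :
    AbsIntegrableAt A σ' := by
  refine h.mono' (by fun_prop)
    ((ae_restrict_iff' measurableSet_Ioi).mpr (.of_forall fun x hx => ?_))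
  have hx1 : (1 : ℝ) ≤ x := le_of_lt hx
  rw [Real.norm_of_nonneg (by positivity)]
  gcongr

lemma AbsIntegrableAt.integrableOn_log_pow {σ t : ℝ} (h : AbsIntegrableAt A σ) (hσt : σ < t)
    (n : ℕ) : IntegrableOn (fun x : ℝ => A x * Real.log x ^ n * x ^ (-t)) (Ioi 1) := by
  obtain ⟨C, hC⟩ := log_pow_mul_rpow_le n (sub_pos.mpr hσt)
  refine (h.const_mul C).mono' (by fun_prop) ?_
  refine (ae_restrict_iff' measurableSet_Ioi).mpr (.of_forall fun x hx => ?_)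
  have hx1 : (1 : ℝ) ≤ x := le_of_lt hx
  rw [mul_assoc, norm_mul, Real.norm_eq_abs, Real.norm_of_nonneg (by
    have := Real.log_nonneg hx1; positivity), mul_left_comm C]
  exact mul_le_mul_of_nonneg_left (hC x hx1 σ t (by linarith)) (abs_nonneg _)

lemma AbsIntegrableAt.integrableOn_logMoment {σ : ℝ} {s : ℂ} (h : AbsIntegrableAt A σ)
    (hs : σ < s.re) (n : ℕ) :
    IntegrableOn (fun x : ℝ => (A x : ℂ) * (Real.log x : ℂ) ^ n * (x : ℂ) ^ (-s)) (Ioi 1) := by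
  have hmeas : AEStronglyMeasurable
      (fun x : ℝ => (A x : ℂ) * ((Real.log x : ℂ) ^ n * (x : ℂ) ^ (-s)))
      (volume.restrict (Ioi 1)) :=
    (Complex.continuous_ofReal.comp_aestronglyMeasurable hA).mul
      (Measurable.aestronglyMeasurable (by fun_prop))
  refine (h.integrableOn_log_pow hA hs n).norm.mono' (by simpa only [mul_assoc] using hmeas) ?_
  refine (ae_restrict_iff' measurableSet_Ioi).mpr (.of_forall fun x hx => ?_)
  have hx1 : (1 : ℝ) ≤ x := le_of_lt hx
  rw [norm_logMoment_integrand A hx1, norm_mul, norm_mul, Real.norm_eq_abs,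
    Real.norm_of_nonneg (by have := Real.log_nonneg hx1; positivity),
    Real.norm_of_nonneg (by positivity), mul_assoc]

lemma hasDerivAt_logMoment {a : ℝ} (habove : ∀ σ, a < σ → AbsIntegrableAt A σ) (n : ℕ) {s : ℂ}
    (hs : a < s.re) : HasDerivAt (logMoment A n) (-logMoment A (n + 1) s) s := by
  set σ := (a + s.re) / 2
  set ε := (s.re - a) / 4
  have hε : 0 < ε := by positivity
  have hσε : σ + 2 * ε = s.re := by ring
  have hσa : a < σ := by simp only [σ]; linarith
  have hre : ∀ z ∈ Metric.ball s ε, σ + ε ≤ z.re := fun z hz => by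
    have := (Complex.abs_re_le_norm (z - s)).trans_lt (mem_ball_iff_norm.mp hz)
    rw [Complex.sub_re] at this
    linarith [(abs_lt.mp this).1]
  have hσ : AbsIntegrableAt A σ := habove σ hσa
  obtain ⟨C, hC⟩ := log_pow_mul_rpow_le (n + 1) hε
  have h := hasDerivAt_integral_of_dominated_loc_of_deriv_le (μ := volume.restrict (Ioi 1))
    (F := fun z x => (A x : ℂ) * (Real.log x : ℂ) ^ n * (x : ℂ) ^ (-z))
    (F' := fun z x => -((A x : ℂ) * (Real.log x : ℂ) ^ (n + 1) * (x : ℂ) ^ (-z)))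
    (bound := fun x => C * (|A x| * x ^ (-σ))) (Metric.ball_mem_nhds s hε)
    (eventually_of_mem (Metric.ball_mem_nhds s hε) fun z hz =>
      (hσ.integrableOn_logMoment hA (by linarith [hre z hz]) n).aestronglyMeasurable)
    (hσ.integrableOn_logMoment hA (by linarith) n)
    (hσ.integrableOn_logMoment hA (by linarith) (n + 1)).aestronglyMeasurable.neg ?_
    (hσ.const_mul C) ?_
  · rw [integral_neg] at h
    exact h.2
  · refine (ae_restrict_iff' measurableSet_Ioi).mpr (.of_forall fun x hx z hz => ?_)
    rw [norm_neg, norm_logMoment_integrand A (le_of_lt hx), mul_left_comm C]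
    exact mul_le_mul_of_nonneg_left (hC x (le_of_lt hx) σ z.re (hre z hz)) (abs_nonneg _)
  · refine (ae_restrict_iff' measurableSet_Ioi).mpr (.of_forall fun x hx z _ => ?_)
    have hx0 : (x : ℂ) ≠ 0 := Complex.ofReal_ne_zero.mpr (by linarith [mem_Ioi.mp hx])
    refine (((hasDerivAt_id z).neg.const_cpow (Or.inl hx0)).const_mul
      ((A x : ℂ) * (Real.log x : ℂ) ^ n)).congr_deriv ?_
    rw [← Complex.ofReal_log (by linarith [mem_Ioi.mp hx]), Pi.neg_apply, id]
    ring

lemma differentiableOn_logMoment {a : ℝ} (habove : ∀ σ, a < σ → AbsIntegrableAt A σ) (n : ℕ) :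
    DifferentiableOn ℂ (logMoment A n) {s | a < s.re} := fun _ hs =>
  (hasDerivAt_logMoment hA habove n hs).differentiableAt.differentiableWithinAt

lemma iteratedDeriv_logMoment_zero {a : ℝ} (habove : ∀ σ, a < σ → AbsIntegrableAt A σ) (n : ℕ)
    {s : ℂ} (hs : a < s.re) : iteratedDeriv n (logMoment A 0) s = (-1) ^ n * logMoment A n s := by
  induction n generalizing s with
  | zero => simp
  | succ n ih =>
    have hev : iteratedDeriv n (logMoment A 0) =ᶠ[𝓝 s] fun z => (-1) ^ n * logMoment A n z :=
      eventually_of_mem ((isOpen_lt continuous_const Complex.continuous_re).mem_nhds hs)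
        fun z hz => ih hz
    rw [iteratedDeriv_succ, hev.deriv_eq,
      ((hasDerivAt_logMoment hA habove n hs).const_mul ((-1 : ℂ) ^ n)).deriv]
    ring

lemma AbsIntegrableAt.integrableOn_Ioc {σ σ' : ℝ} (h : AbsIntegrableAt A σ) (hσ' : σ' ≤ σ)
    (X : ℝ) : IntegrableOn (fun x : ℝ => |A x| * x ^ (-σ')) (Ioc 1 X) := by
  have hA' : AEStronglyMeasurable A (volume.restrict (Ioc 1 X)) :=
    hA.mono_set Ioc_subset_Ioi_self
  refine ((h.mono_set Ioc_subset_Ioi_self).const_mul (X ^ (σ - σ'))).mono' (by fun_prop)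
    ((ae_restrict_iff' measurableSet_Ioc).mpr (.of_forall fun x hx => ?_))
  have hx0 : 0 < x := one_pos.trans hx.1
  rw [Real.norm_of_nonneg (by positivity), mul_left_comm,
    show -σ' = (σ - σ') + -σ by ring, Real.rpow_add hx0]
  gcongr
  exact hx.2

lemma AbsIntegrableAt.summable_mul_integral_Ioc {σ : ℝ} (h : AbsIntegrableAt A σ) (ρ X : ℝ) :
    Summable fun n : ℕ => ρ ^ n / n ! * ∫ x in Ioc 1 X, A x * Real.log x ^ n * x ^ (-σ) := by
  set M := ∫ x in Ioc 1 X, |A x| * x ^ (-σ)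
  have hJ : ∀ n : ℕ, ‖∫ x in Ioc 1 X, A x * Real.log x ^ n * x ^ (-σ)‖ ≤ Real.log X ^ n * M := by
    intro n
    rw [← integral_const_mul]
    refine norm_integral_le_of_norm_le ((h.integrableOn_Ioc hA le_rfl X).const_mul _)
      ((ae_restrict_iff' measurableSet_Ioc).mpr (.of_forall fun x hx => ?_))
    have hx0 : 0 < x := one_pos.trans hx.1
    have hlog : 0 ≤ Real.log x := Real.log_nonneg hx.1.le
    rw [norm_mul, norm_mul, norm_pow, Real.norm_eq_abs, Real.norm_of_nonneg hlog,
      Real.norm_of_nonneg (by positivity), mul_left_comm, mul_assoc]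
    gcongr
    exact hx.2
  refine Summable.of_norm_bounded ((Real.summable_pow_div_factorial (|ρ| * Real.log X)).mul_left M)
    fun n => ?_
  rw [norm_mul, norm_div, norm_pow, Real.norm_eq_abs, Real.norm_natCast]
  calc _ ≤ |ρ| ^ n / n ! * (Real.log X ^ n * M) := by gcongr; exact hJ n
    _ = M * ((|ρ| * Real.log X) ^ n / n !) := by ring

lemma integrableOn_Ioi_of_summable_mul_integral_Ioi {X σ σ₀ ρ : ℝ} (hX : 1 ≤ X)
    (hpos : ∀ x, X < x → 0 ≤ A x) (h : AbsIntegrableAt A σ) (hσ : σ < σ₀) (hρ : 0 ≤ ρ)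
    (hsum : Summable fun n : ℕ => ρ ^ n / n ! * ∫ x in Ioi X, A x * Real.log x ^ n * x ^ (-σ₀)) :
    IntegrableOn (fun x : ℝ => |A x| * x ^ (-(σ₀ - ρ))) (Ioi X) := by
  refine integrable_of_hasSum_of_nonneg
    (u := fun n x => ρ ^ n / n ! * (A x * Real.log x ^ n * x ^ (-σ₀)))
    (fun n => ((h.integrableOn_log_pow hA hσ n).mono_set (Ioi_subset_Ioi hX)).const_mul _)
    (fun n => (ae_restrict_iff' measurableSet_Ioi).mpr (.of_forall fun x hx => ?_))
    ((ae_restrict_iff' measurableSet_Ioi).mpr (.of_forall fun x hx => ?_))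
    (by simpa only [integral_const_mul] using hsum)
  · have hx0 : 0 < x := one_pos.trans_le (hX.trans hx.le)
    have hlog := Real.log_nonneg (hX.trans hx.le)
    exact mul_nonneg (by positivity) (mul_nonneg (mul_nonneg (hpos x hx) (by positivity))
      (by positivity))
  · have hx0 : 0 < x := one_pos.trans_le (hX.trans hx.le)
    have hexp := (NormedSpace.expSeries_div_hasSum_exp (ρ * Real.log x)).mul_right
      (A x * x ^ (-σ₀))
    rw [← Real.exp_eq_exp_ℝ, mul_comm ρ, ← Real.rpow_def_of_pos hx0] at hexp
    have hterm : (fun n : ℕ => ρ ^ n / n ! * (A x * Real.log x ^ n * x ^ (-σ₀))) =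
        fun n => (Real.log x * ρ) ^ n / n ! * (A x * x ^ (-σ₀)) := by
      funext n
      ring
    have hvalue : |A x| * x ^ (-(σ₀ - ρ)) = x ^ ρ * (A x * x ^ (-σ₀)) := by
      rw [abs_of_nonneg (hpos x hx), show -(σ₀ - ρ) = ρ + -σ₀ by ring, Real.rpow_add hx0]
      ring
    rw [hterm, hvalue]
    exact hexp

lemma absIntegrableAt_sub_of_summable {X σ σ₀ ρ : ℝ} (hX : 1 ≤ X) (hpos : ∀ x, X < x → 0 ≤ A x)
    (h : AbsIntegrableAt A σ) (hσ : σ < σ₀) (hρ : 0 ≤ ρ)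
    (hsum : Summable fun n : ℕ => ρ ^ n / n ! * ∫ x in Ioi 1, A x * Real.log x ^ n * x ^ (-σ₀)) :
    AbsIntegrableAt A (σ₀ - ρ) := by
  have hσ₀ := h.mono hA hσ.le
  have hsplit : ∀ n : ℕ, ∫ x in Ioi 1, A x * Real.log x ^ n * x ^ (-σ₀) =
      (∫ x in Ioc 1 X, A x * Real.log x ^ n * x ^ (-σ₀)) +
        ∫ x in Ioi X, A x * Real.log x ^ n * x ^ (-σ₀) := fun n => by
    have hint := h.integrableOn_log_pow hA hσ n
    rw [← Ioc_union_Ioi_eq_Ioi hX]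
    exact setIntegral_union (Ioc_disjoint_Ioi le_rfl) measurableSet_Ioi
      (hint.mono_set Ioc_subset_Ioi_self) (hint.mono_set (Ioi_subset_Ioi hX))
  rw [AbsIntegrableAt, ← Ioc_union_Ioi_eq_Ioi hX]
  refine (hσ₀.integrableOn_Ioc hA (by linarith) X).union
    (integrableOn_Ioi_of_summable_mul_integral_Ioi hA hX hpos h hσ hρ ?_)
  refine (hsum.sub (hσ₀.summable_mul_integral_Ioc hA ρ X)).congr fun n => ?_
  rw [hsplit n]
  ring

lemma summable_mul_integral_of_differentiableOn_ball {a σ₀ r ρ : ℝ} {G : ℂ → ℂ}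
    (habove : ∀ σ, a < σ → AbsIntegrableAt A σ) (ha : a < σ₀)
    (hG : DifferentiableOn ℂ G (Metric.ball (σ₀ : ℂ) r)) (hGg : G =ᶠ[𝓝 (σ₀ : ℂ)] logMoment A 0)
    (hρ : 0 ≤ ρ) (hρr : ρ < r) :
    Summable fun n : ℕ => ρ ^ n / n ! * ∫ x in Ioi 1, A x * Real.log x ^ n * x ^ (-σ₀) := by
  have hmem : ((σ₀ - ρ : ℝ) : ℂ) ∈ Metric.ball (σ₀ : ℂ) r := by
    rw [Metric.mem_ball, Complex.dist_eq, ← Complex.ofReal_sub, Complex.norm_real,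
      Real.norm_eq_abs, sub_sub_cancel_left, abs_neg, abs_of_nonneg hρ]
    exact hρr
  refine Complex.summable_ofReal.mp
    ((Complex.hasSum_taylorSeries_on_ball hG hmem).summable.congr fun n => ?_)
  set I := ∫ x in Ioi 1, A x * Real.log x ^ n * x ^ (-σ₀)
  have hsign : (-(ρ : ℂ)) ^ n * (-1) ^ n = (ρ : ℂ) ^ n := by
    rw [← mul_pow, neg_mul_neg, mul_one]
  rw [hGg.iteratedDeriv_eq n, iteratedDeriv_logMoment_zero hA habove n (by simpa using ha),
    logMoment_ofReal, ← Complex.ofReal_sub, sub_sub_cancel_left, smul_eq_mul, smul_eq_mul]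
  push_cast
  linear_combination (n ! : ℂ)⁻¹ * (I : ℂ) * hsign

theorem absIntegrableAt_of_eventually_nonneg {σ₁ c X : ℝ} {U : Set ℂ} {G : ℂ → ℂ} (hX : 1 ≤ X)
    (hpos : ∀ x, X < x → 0 ≤ A x) (hc : ∀ σ, c < σ → AbsIntegrableAt A σ) (hU : IsOpen U)
    (hray : ∀ σ : ℝ, σ₁ < σ → (σ : ℂ) ∈ U) (hG : DifferentiableOn ℂ G U)
    (hagree : ∀ s : ℂ, c < s.re → logMoment A 0 s = G s) :
    ∀ σ, σ₁ < σ → AbsIntegrableAt A σ := by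
  by_contra! ⟨σ₂, hσ₁₂, hσ₂⟩
  obtain ⟨a, hσ₂a, habove, hbelow⟩ := IsUpperSet.exists_Ioi_subset_subset_Ici
    (S := {σ | AbsIntegrableAt A σ}) (fun σ σ' h hσ => hσ.mono hA h) (hc (c + 1) (by linarith))
    hσ₂
  replace habove : ∀ σ, a < σ → AbsIntegrableAt A σ := fun σ hσ => habove hσ
  obtain ⟨r, hr, hball⟩ := Metric.isOpen_iff.mp hU a (hray a (by linarith))
  -- Expand `G` around `a + r/4` on a ball of radius `r/2` inside `U`, and evaluate at `a - r/12`.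
  have hGg : G =ᶠ[𝓝 ((a + r / 4 : ℝ) : ℂ)] logMoment A 0 :=
    (eventuallyEq_nhds_ofReal_of_eqOn_halfPlane (differentiableOn_logMoment hA habove 0) hU hG
      (fun σ hσ => hray σ (by linarith)) hagree (by linarith)).symm
  have hsub : Metric.ball ((a + r / 4 : ℝ) : ℂ) (r / 2) ⊆ Metric.ball (a : ℂ) r := by
    refine Metric.ball_subset_ball' ?_
    rw [Complex.dist_eq, ← Complex.ofReal_sub, Complex.norm_real, Real.norm_eq_abs,
      add_sub_cancel_left, abs_of_pos (by positivity)]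
    linarith
  have hsum := summable_mul_integral_of_differentiableOn_ball hA habove (by linarith)
    (hG.mono (hsub.trans hball)) hGg (by positivity : 0 ≤ r / 3) (by linarith)
  have hbelow_a : a + r / 4 - r / 3 ∈ Ici a := hbelow (absIntegrableAt_sub_of_summable hA hX hpos
    (habove (a + r / 8) (by linarith)) (by linarith) (by positivity) hsum)
  linarith [mem_Ici.mp hbelow_a]

theorem absIntegrableAt_of_eventually_sign {σ₁ c X : ℝ} {U : Set ℂ} {G : ℂ → ℂ} (hX : 1 ≤ X)
    (hsign : (∀ x, X < x → 0 ≤ A x) ∨ ∀ x, X < x → A x ≤ 0)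
    (hc : ∀ σ, c < σ → AbsIntegrableAt A σ) (hU : IsOpen U)
    (hray : ∀ σ : ℝ, σ₁ < σ → (σ : ℂ) ∈ U) (hG : DifferentiableOn ℂ G U)
    (hagree : ∀ s : ℂ, c < s.re → logMoment A 0 s = G s) :
    ∀ σ, σ₁ < σ → AbsIntegrableAt A σ := by
  rcases hsign with hpos | hneg
  · exact absIntegrableAt_of_eventually_nonneg hA hX hpos hc hU hray hG hagree
  · simpa only [absIntegrableAt_neg] using absIntegrableAt_of_eventually_nonneg hA.neg hX
      (fun x hx => neg_nonneg.mpr (hneg x hx)) (by simpa only [absIntegrableAt_neg] using hc) hU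
      hray hG.neg (fun s hs => by rw [logMoment_neg, hagree s hs, Pi.neg_apply])

end Landau

theorem landau_contrapositive_general (A : ℝ → ℝ) (σ₁ c : ℝ) (U : Set ℂ) (G : ℂ → ℂ)
    (hA : ContinuousOn A (Set.Ici (1 : ℝ)))
    (hconv : ∀ s : ℂ, c < s.re →
      IntegrableOn (fun x : ℝ => (A x : ℂ) * (x : ℂ) ^ (-s)) (Set.Ioi (1 : ℝ)))
    (hUopen : IsOpen U)
    (hray : ∀ σ : ℝ, σ₁ < σ → (σ : ℂ) ∈ U)
    (hG : DifferentiableOn ℂ G U)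
    (hagree : ∀ s : ℂ, c < s.re →
      G s = ∫ x in Set.Ioi (1 : ℝ), (A x : ℂ) * (x : ℂ) ^ (-s))
    (hnoext : ¬ ∃ H : ℂ → ℂ, DifferentiableOn ℂ H {s : ℂ | σ₁ < s.re} ∧
      ∀ s : ℂ, c < s.re →
        H s = ∫ x in Set.Ioi (1 : ℝ), (A x : ℂ) * (x : ℂ) ^ (-s)) :
    ∀ X : ℝ, 1 ≤ X → ∃ x y : ℝ, X < x ∧ X < y ∧ 0 < A x ∧ A y < 0 := by
  intro X hX
  by_contra! hno_change
  have hsign : (∀ x, X < x → 0 ≤ A x) ∨ ∀ x, X < x → A x ≤ 0 := by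
    by_contra! ⟨⟨y, hy, hAy⟩, ⟨x, hx, hAx⟩⟩
    exact hAy.not_ge (hno_change x y hx hy hAx)
  have hmeas : AEStronglyMeasurable A (volume.restrict (Ioi 1)) :=
    (hA.mono Ioi_subset_Ici_self).aestronglyMeasurable measurableSet_Ioi
  have habs := Landau.absIntegrableAt_of_eventually_sign hmeas hX hsign
    (fun σ hσ => Landau.absIntegrableAt_of_integrableOn (hconv σ (by simpa using hσ))) hUopen hray
    hG fun s hs => (Landau.logMoment_zero A s).trans (hagree s hs).symm
  exact hnoext ⟨Landau.logMoment A 0, Landau.differentiableOn_logMoment hmeas habs 0,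
    fun s _ => Landau.logMoment_zero A s⟩

/-- **Contrapositive of Landau's theorem.** Let `A : [1,∞) → ℝ` be continuous, with
`g(s) = ∫₁^∞ A(x) x^{-s} dx` convergent on a half-plane `{Re s > c}`. If there is a
holomorphic function `G` on an open set `U` containing the real ray `{σ > σ₁}` and the
half-plane `{Re s > c}`, agreeing with `g` on that half-plane, while `g` admits no
holomorphic extension to the full half-plane `{Re s > σ₁}`, then `A` changes sign at
arbitrarily large arguments. -/
theorem landau_contrapositive (A : ℝ → ℝ) (σ₁ c : ℝ) (U : Set ℂ) (G : ℂ → ℂ)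
    (hA : ContinuousOn A (Set.Ici (1 : ℝ)))
    (hconv : ∀ s : ℂ, c < s.re →
      IntegrableOn (fun x : ℝ => (A x : ℂ) * (x : ℂ) ^ (-s)) (Set.Ioi (1 : ℝ)))
    (hUopen : IsOpen U)
    (hray : ∀ σ : ℝ, σ₁ < σ → (σ : ℂ) ∈ U)
    (hhalf : {s : ℂ | c < s.re} ⊆ U)
    (hG : DifferentiableOn ℂ G U)
    (hagree : ∀ s : ℂ, c < s.re →
      G s = ∫ x in Set.Ioi (1 : ℝ), (A x : ℂ) * (x : ℂ) ^ (-s))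
    (hnoext : ¬ ∃ H : ℂ → ℂ, DifferentiableOn ℂ H {s : ℂ | σ₁ < s.re} ∧
      ∀ s : ℂ, c < s.re →
        H s = ∫ x in Set.Ioi (1 : ℝ), (A x : ℂ) * (x : ℂ) ^ (-s)) :
    ∀ X : ℝ, 1 ≤ X → ∃ x y : ℝ, X < x ∧ X < y ∧ 0 < A x ∧ A y < 0 :=
  landau_contrapositive_general A σ₁ c U G hA hconv hUopen hray hG hagree hnoext
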